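/- The full subcategory of regular simplicial sets is reflective in the category of simplicial sets: the inclusion functor admits a left adjoint (regularization). -/

import Mathlib

open CategoryTheory GrothendieckTopology Simplicial Opposite Limits

namespace SSet

/-- Naturality of the Yoneda bijection for simplicial sets. -/
lemma yonedaEquiv_symm_naturality' {m n : SimplexCategory} (f : m ⟶ n) (X : SSet)
    (y : X.obj (op n)) :
    SSet.stdSimplex.map f ≫ (yonedaEquiv (X := X) (n := n)).symm y = (yonedaEquiv (X := X) (n := m)).symm (X.map f.op y) := by
  ext k x
  show X.map (x.down ≫ f).op y = X.map x.down.op (X.map f.op y)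
  rw [op_comp, Functor.map_comp_apply]

variable (X : SSet)

/-- A simplex is degenerate if it is the image of a simplex of strictly lower degree
under a simplicial operator. -/
def Degenerate {n : ℕ} (y : X _⦋n⦌) : Prop :=
  ∃ (m : ℕ) (σ : (⦋n⦌ : SimplexCategory) ⟶ ⦋m⦌) (z : X _⦋m⦌), m < n ∧ y = X.map σ.op z

/-- A simplex is non-degenerate if it is not degenerate. -/
def Nondegenerate {n : ℕ} (y : X _⦋n⦌) : Prop := ¬ X.Degenerate y

/-- The representing map `Δ[n] ⟶ X` of the `(n+1)`-st face `y ∘ δₙ₊₁` of an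
`(n+1)`-simplex `y` of `X`. -/
noncomputable def lastFaceMap {n : ℕ} (y : X _⦋n+1⦌) : Δ[n] ⟶ X :=
  (yonedaEquiv (X := X) (n := ⦋n⦌)).symm (X.map (SimplexCategory.δ (Fin.last (n+1))).op y)

/-- The canonical map `Δ[n+1] ⊔_{Δ[n]} Y' ⟶ X`, where `Y'` is the simplicial subset of `X`
generated by the last face of `y` (i.e. the image of the representing map of that face). -/
noncomputable def regularityMap {n : ℕ} (y : X _⦋n+1⦌) :
    pushout (SSet.stdSimplex.{u_1}.map (SimplexCategory.δ (Fin.last (n+1))))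
      (Subfunctor.toRange (X.lastFaceMap y)) ⟶ X :=
  pushout.desc ((yonedaEquiv (X := X) (n := ⦋n+1⦌)).symm y) (Subfunctor.range (X.lastFaceMap y)).ι
    (by rw [yonedaEquiv_symm_naturality']; exact (Subfunctor.toRange_ι _).symm)

/-- A simplicial set is regular if, for each of its non-degenerate simplices `y`,
the canonical map from the pushout `Δ[n+1] ⊔_{Δ[n]} Y'` to `X` is degreewise injective. -/
def IsRegular : Prop :=
  ∀ (n : ℕ) (y : X _⦋n+1⦌), X.Nondegenerate y →
    ∀ (k : SimplexCategoryᵒᵖ), Function.Injective ((X.regularityMap y).app k)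

end SSet


universe u

/-!
Regularity can be tested simplex by simplex: `X` is regular iff for every non-degenerate
`z : X _⦋m⦌` and all `α β : ⦋k⦌ ⟶ ⦋m⦌` with `α^* z = β^* z`, either `α = β` or neither `α` nor
`β` hits the last vertex. This condition passes to any `X` with a jointly injective family of maps
`π i : X ⟶ Y i` into regular simplicial sets. Write `π i y = (τ i)^* (z i)` with `τ i` an
epimorphism and `z i` non-degenerate (Eilenberg–Zilber). If `α ≠ β` and `α` hits the last vertex,
so does every `α ≫ τ i`, so regularity of `Y i` forces `α ≫ τ i = β ≫ τ i`. All the `τ i` then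
identify two adjacent vertices, and joint injectivity makes `y` degenerate.

Hence regular simplicial sets are closed under limits and under subobjects. The second property
shows that the regular quotients of `X` form a solution set, and the general adjoint functor
theorem provides the left adjoint.
-/

namespace CategoryTheory.Limits.Types

variable {S X₁ X₂ : Type u} {f : S ⟶ X₁} {g : S ⟶ X₂}

lemma pushoutCocone_inl_eq_inl_iff_of_isColimit {c : PushoutCocone f g} (hc : IsColimit c)
    (h₁ : Function.Injective f) (x₁ y₁ : X₁) :
    c.inl x₁ = c.inl y₁ ↔ x₁ = y₁ ∨ ∃ (x₀ y₀ : S) (_ : g x₀ = g y₀), x₁ = f x₀ ∧ y₁ = f y₀ := by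
  have := (mono_iff_injective f).2 h₁
  let e := hc.coconePointUniqueUpToIso (Pushout.isColimitCocone f g)
  have he (x : X₁) : e.hom (c.inl x) = Pushout.inl f g x :=
    ConcreteCategory.congr_hom (hc.comp_coconePointUniqueUpToIso_hom _ WalkingSpan.left) x
  rw [← ((isIso_iff_bijective e.hom).1 inferInstance).injective.eq_iff, he, he]
  exact (Pushout.quot_mk_eq_iff f g _ _).trans (Pushout.inl_rel'_inl_iff f g _ _)

end CategoryTheory.Limits.Types

namespace SimplexCategory

lemma exists_eq_comp_δ_last_iff {k : SimplexCategory} {n : ℕ} (γ : k ⟶ ⦋n+1⦌) :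
    (∃ γ', γ = γ' ≫ δ (Fin.last (n+1))) ↔ Fin.last (n+1) ∉ Set.range γ.toOrderHom := by
  refine ⟨?_, fun h => eq_comp_δ_of_not_surjective' γ _ fun t ht => h ⟨t, ht⟩⟩
  rintro ⟨γ', rfl⟩ ⟨t, ht⟩
  simp [δ, Fin.succAbove_last] at ht

lemma apply_last_of_epi {m n : ℕ} (σ : ⦋m⦌ ⟶ ⦋n⦌) [Epi σ] :
    σ.toOrderHom (Fin.last m) = Fin.last n := by
  obtain ⟨s, hs⟩ := (epi_iff_surjective (f := σ)).1 inferInstance (Fin.last n)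
  exact le_antisymm (Fin.le_last _) (hs ▸ σ.toOrderHom.monotone (Fin.le_last s))

lemma σ_comp_δ_succ_comp_eq {n : ℕ} {b : SimplexCategory} (τ : ⦋n+1⦌ ⟶ b) (j : Fin (n+1))
    (hj : τ.toOrderHom j.castSucc = τ.toOrderHom j.succ) : σ j ≫ δ j.succ ≫ τ = τ := by
  obtain ⟨θ, rfl⟩ := eq_σ_comp_of_not_injective' τ j hj
  rw [reassoc_of% δ_comp_σ_succ]

lemma exists_apply_castSucc_eq_apply_succ {k : SimplexCategory} {n : ℕ} {α β : k ⟶ ⦋n+1⦌}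
    (hαβ : α ≠ β) {ι : Type*} {b : ι → SimplexCategory} (τ : ∀ i, ⦋n+1⦌ ⟶ b i)
    (h : ∀ i, α ≫ τ i = β ≫ τ i) :
    ∃ j : Fin (n+1), ∀ i, (τ i).toOrderHom j.castSucc = (τ i).toOrderHom j.succ := by
  obtain ⟨t, ht⟩ : ∃ t, α.toOrderHom t ≠ β.toOrderHom t := by
    by_contra! H
    exact hαβ (Hom.ext _ _ (OrderHom.ext _ _ (funext H)))
  have hτ (i) : (τ i).toOrderHom (α.toOrderHom t) = (τ i).toOrderHom (β.toOrderHom t) :=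
    congrArg (fun γ : k ⟶ b i => γ.toOrderHom t) (h i)
  obtain ⟨lo, hi, hlt, heq⟩ :
      ∃ lo hi, lo < hi ∧ ∀ i, (τ i).toOrderHom lo = (τ i).toOrderHom hi := by
    rcases ht.lt_or_gt with hlt | hlt
    exacts [⟨_, _, hlt, hτ⟩, ⟨_, _, hlt, fun i => (hτ i).symm⟩]
  refine ⟨lo.castPred (Fin.ne_last_of_lt hlt), fun i =>
    le_antisymm ((τ i).toOrderHom.monotone (Fin.castSucc_le_succ _)) ?_⟩
  calc (τ i).toOrderHom (lo.castPred _).succ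
      ≤ (τ i).toOrderHom hi := (τ i).toOrderHom.monotone ((Fin.succ_castPred_le_iff _).2 hlt)
    _ = (τ i).toOrderHom (lo.castPred _).castSucc := by rw [Fin.castSucc_castPred, heq]

end SimplexCategory

namespace SSet

variable {X Z : SSet.{u}}

lemma regularityMap_app_injective_iff {n : ℕ} (y : X _⦋n+1⦌) (k : SimplexCategoryᵒᵖ) :
    Function.Injective ((X.regularityMap y).app k) ↔
      ∀ α β : k.unop ⟶ ⦋n+1⦌, X.map α.op y = X.map β.op y → α = β ∨
        (∃ α', α = α' ≫ SimplexCategory.δ (Fin.last (n+1))) ∧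
          (∃ β', β = β' ≫ SimplexCategory.δ (Fin.last (n+1))) := by
  set f : (Δ[n] : SSet.{u}) ⟶ Δ[n+1] := SSet.stdSimplex.map (SimplexCategory.δ (Fin.last (n+1)))
  set g := Subfunctor.toRange (X.lastFaceMap y)
  have hf : Function.Injective (f.app k) := fun ⟨a⟩ ⟨b⟩ h => congrArg ULift.up
    ((cancel_mono (SimplexCategory.δ (Fin.last (n+1)))).1 (congrArg ULift.down h))
  have hinl_eq_inl (p q : Δ[n+1].obj k) := Types.pushoutCocone_inl_eq_inl_iff_of_isColimit
    (((evaluation _ _).obj k).map_isPushout (IsPushout.of_hasPushout f g)).isColimit hf p q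
  have hinl (α : k.unop ⟶ ⦋n+1⦌) :
      (X.regularityMap y).app k ((pushout.inl f g).app k ⟨α⟩) = X.map α.op y := by
    have h : pushout.inl f g ≫ X.regularityMap y = yonedaEquiv.symm y := pushout.inl_desc _ _ _
    exact ConcreteCategory.congr_hom (NatTrans.congr_app h k) ⟨α⟩
  constructor
  · intro hinj α β h
    rcases (hinl_eq_inl _ _).1 (hinj ((hinl α).trans (h.trans (hinl β).symm)))
      with e | ⟨⟨a⟩, ⟨b⟩, -, ha, hb⟩
    · exact Or.inl (congrArg ULift.down e)
    · exact Or.inr ⟨⟨a, congrArg ULift.down ha⟩, ⟨b, congrArg ULift.down hb⟩⟩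
  · intro H p q hpq
    obtain ⟨⟨α⟩, rfl⟩ := (epi_iff_surjective ((pushout.inl f g).app k)).1 inferInstance p
    obtain ⟨⟨β⟩, rfl⟩ := (epi_iff_surjective ((pushout.inl f g).app k)).1 inferInstance q
    rw [hinl, hinl] at hpq
    rcases H α β hpq with rfl | ⟨⟨a, rfl⟩, ⟨b, rfl⟩⟩
    · rfl
    · refine (hinl_eq_inl _ _).2 (Or.inr ⟨⟨a⟩, ⟨b⟩, Subtype.ext ?_, rfl, rfl⟩)
      rw [op_comp, op_comp, Functor.map_comp_apply, Functor.map_comp_apply] at hpq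
      exact hpq

lemma nondegenerate_iff_mem_nonDegenerate {n : ℕ} (y : X _⦋n⦌) :
    X.Nondegenerate y ↔ y ∈ X.nonDegenerate n :=
  not_congr ⟨fun ⟨m, σ, z, hm, hy⟩ => ⟨m, hm, σ, z, hy.symm⟩,
    fun ⟨m, hm, σ, z, hy⟩ => ⟨m, σ, z, hm, hy.symm⟩⟩

lemma isRegular_iff : X.IsRegular ↔ ∀ (m : ℕ) (z : X _⦋m⦌), z ∈ X.nonDegenerate m →
    ∀ (k : SimplexCategory) (α β : k ⟶ ⦋m⦌), X.map α.op z = X.map β.op z →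
      α = β ∨ Fin.last m ∉ Set.range α.toOrderHom ∧ Fin.last m ∉ Set.range β.toOrderHom := by
  simp only [IsRegular, regularityMap_app_injective_iff, nondegenerate_iff_mem_nonDegenerate,
    SimplexCategory.exists_eq_comp_δ_last_iff]
  refine ⟨fun H m z hz k α β h => ?_, fun H n y hy k α β h => H _ y hy _ α β h⟩
  cases m with
  | zero => exact Or.inl (Subsingleton.elim _ _)
  | succ m => exact H m z hz (op k) α β h

section JointlyInjective

variable {ι : Type*} {Y : ι → SSet.{u}} (π : ∀ i, X ⟶ Y i)

lemma mem_degenerate_of_apply_castSucc_eq_apply_succ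
    (hπ : ∀ k (x x' : X.obj k), (∀ i, (π i).app k x = (π i).app k x') → x = x')
    {n : ℕ} {y : X _⦋n+1⦌} {m : ι → ℕ} (τ : ∀ i, ⦋n+1⦌ ⟶ ⦋m i⦌) (z : ∀ i, Y i _⦋m i⦌)
    (hz : ∀ i, (π i).app _ y = (Y i).map (τ i).op (z i))
    (j : Fin (n+1)) (hj : ∀ i, (τ i).toOrderHom j.castSucc = (τ i).toOrderHom j.succ) :
    y ∈ X.degenerate (n+1) := by
  have : X.σ j (X.δ j.succ y) = y := hπ _ _ _ fun i => by
    change (π i).app _ (X.map (SimplexCategory.σ j).op (X.map (SimplexCategory.δ j.succ).op y)) = _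
    rw [NatTrans.naturality_apply, NatTrans.naturality_apply, hz, ← Functor.map_comp_apply,
      ← Functor.map_comp_apply, ← op_comp, ← op_comp, Category.assoc,
      SimplexCategory.σ_comp_δ_succ_comp_eq _ j (hj i)]
  exact this ▸ X.σ_mem_degenerate j _

lemma isRegular_of_jointly_injective
    (hπ : ∀ k (x x' : X.obj k), (∀ i, (π i).app k x = (π i).app k x') → x = x')
    (hY : ∀ i, (Y i).IsRegular) : X.IsRegular := by
  rw [isRegular_iff]
  intro m y hy k α β h
  rcases m with _ | n
  · exact Or.inl (Subsingleton.elim _ _)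
  suffices H : ∀ α β : k ⟶ ⦋n+1⦌, X.map α.op y = X.map β.op y → α ≠ β →
      Fin.last (n+1) ∉ Set.range α.toOrderHom by
    by_cases hαβ : α = β
    exacts [Or.inl hαβ, Or.inr ⟨H α β h hαβ, H β α h.symm (Ne.symm hαβ)⟩]
  rintro α β h hαβ ⟨t, ht⟩
  choose m τ hτ z hz using fun i => (Y i).exists_nonDegenerate ((π i).app _ y)
  have hcomp (i) : α ≫ τ i = β ≫ τ i := by
    have h' : (Y i).map (α ≫ τ i).op (z i) = (Y i).map (β ≫ τ i).op (z i) := by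
      simp only [op_comp, Functor.map_comp_apply, ← hz, ← NatTrans.naturality_apply, h]
    refine (isRegular_iff.1 (hY i) _ _ (z i).2 _ _ _ h').resolve_right fun hlast => hlast.1 ⟨t, ?_⟩
    simp [ht, SimplexCategory.apply_last_of_epi]
  obtain ⟨j, hj⟩ := SimplexCategory.exists_apply_castSucc_eq_apply_succ hαβ τ hcomp
  exact hy (mem_degenerate_of_apply_castSucc_eq_apply_succ π hπ τ (fun i => z i) hz j hj)

end JointlyInjective

lemma isRegular_of_isLimit {J : Type u} [Category.{u} J] {F : J ⥤ SSet.{u}} {c : Cone F}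
    (hc : IsLimit c) (hF : ∀ j, (F.obj j).IsRegular) : c.pt.IsRegular :=
  isRegular_of_jointly_injective (fun j => c.π.app j)
    (fun k => Concrete.isLimit_ext _ (isLimitOfPreserves ((evaluation _ _).obj k) hc)) hF

def IsCongruence (r : ∀ k, Setoid (X.obj k)) : Prop :=
  ∀ ⦃k k' : SimplexCategoryᵒᵖ⦄ (γ : k ⟶ k') ⦃x x' : X.obj k⦄,
    r k x x' → r k' (X.map γ x) (X.map γ x')

variable (X) in
def quotient (r : ∀ k, Setoid (X.obj k)) (hr : IsCongruence r) : SSet.{u} where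
  obj k := Quotient (r k)
  map γ := TypeCat.ofHom (Quotient.map' (X.map γ) (hr γ))
  map_id k := by
    ext ⟨x⟩
    exact congrArg (Quotient.mk _) (X.map_id_apply _ x)
  map_comp γ γ' := by
    ext ⟨x⟩
    exact congrArg (Quotient.mk _) (X.map_comp_apply γ γ' x)

variable (X) in
def toQuotient (r : ∀ k, Setoid (X.obj k)) (hr : IsCongruence r) : X ⟶ X.quotient r hr where
  app k := TypeCat.ofHom (Quotient.mk (r k))

lemma isCongruence_ker (h : X ⟶ Z) : IsCongruence fun k => Setoid.ker (h.app k) :=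
  fun _ _ γ _ _ hxx' => (NatTrans.naturality_apply h γ _).trans
    ((congrArg _ hxx').trans (NatTrans.naturality_apply h γ _).symm)

def kerLift (h : X ⟶ Z) : X.quotient _ (isCongruence_ker h) ⟶ Z where
  app k := TypeCat.ofHom (Setoid.kerLift (h.app k))
  naturality k k' γ := by
    ext ⟨x⟩
    exact NatTrans.naturality_apply h γ x

lemma toQuotient_kerLift (h : X ⟶ Z) : X.toQuotient _ (isCongruence_ker h) ≫ kerLift h = h := rfl

lemma kerLift_app_injective (h : X ⟶ Z) (k : SimplexCategoryᵒᵖ) :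
    Function.Injective ((kerLift h).app k) :=
  Setoid.kerLift_injective _

lemma solutionSetCondition_ι_isRegular :
    SolutionSetCondition.{u} (ObjectProperty.ι (fun X : SSet.{u} => X.IsRegular)) := by
  intro X
  refine ⟨{r : ∀ k, Setoid (X.obj k) // ∃ hr : IsCongruence r, (X.quotient r hr).IsRegular},
    fun r => ⟨X.quotient r.1 r.2.fst, r.2.snd⟩, fun r => X.toQuotient r.1 r.2.fst, fun Z h => ?_⟩
  have hreg : (X.quotient _ (isCongruence_ker h)).IsRegular :=
    isRegular_of_jointly_injective (fun _ : Unit => kerLift h)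
      (fun k _ _ hxx => kerLift_app_injective h k (hxx ())) fun _ => Z.2
  exact ⟨⟨_, _, hreg⟩, ObjectProperty.homMk (kerLift h), toQuotient_kerLift h⟩

instance (J : Type u) [Category.{u} J] :
    ObjectProperty.IsClosedUnderLimitsOfShape (fun X : SSet.{u} => X.IsRegular) J :=
  ⟨fun _ ⟨h⟩ => isRegular_of_isLimit h.isLimit h.prop_diag_obj⟩

end SSet

/-- The full subcategory of regular simplicial sets is reflective in the category of
simplicial sets: the inclusion functor admits a left adjoint (regularization). -/
theorem regular_reflective :
    Nonempty (Reflective (ObjectProperty.ι (fun X : SSet.{u} => X.IsRegular))) := by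
  have : HasLimits (ObjectProperty.FullSubcategory fun X : SSet.{u} => X.IsRegular) :=
    ⟨fun _ _ => inferInstance⟩
  have : PreservesLimits (ObjectProperty.ι fun X : SSet.{u} => X.IsRegular) :=
    ⟨preservesLimitOfShape_of_createsLimitsOfShape_and_hasLimitsOfShape _⟩
  have := isRightAdjoint_of_preservesLimits_of_solutionSetCondition _
    SSet.solutionSetCondition_ι_isRegular
  exact ⟨{ L := _, adj := Adjunction.ofIsRightAdjoint _ }⟩
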